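/- Let (C,e) be a Morita context, i.e. a ring C with an idempotent e, e' = 1-e, A = eCe, B = e'Ce', M = e'Ce, N = eCe', and let C̄ = C/CeC be the Morita defect. Applying e'C ⊗_C - ⊗_C Ce' to the exact sequence 0 → Ω_{C/A} → Ce ⊗_{eCe} eC → C → C̄ → 0 (where the middle map μ_e is induced by multiplication and Ω_{C/A} is its kernel) yields an exact sequence of B-bimodules 0 → Ω_{C/A} → M ⊗_A N → B → C̄ → 0, where the map M ⊗_A N → B is induced by multiplication in C. In particular C̄ ≅ B/((CeC) ∩ B), so the Morita defect C̄ is a homomorphic image of B isomorphic to the cokernel of the multiplication map M ⊗_A N → B; moreover the C-bimodule Ω_{C/A} is annihilated by e on both sides. -/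

import Mathlib

open CategoryTheory MulOpposite

attribute [local instance] HasDerivedCategory.standard
attribute [local instance] CategoryTheory.hasExt_of_hasDerivedCategory

set_option maxHeartbeats 1000000
set_option synthInstance.maxHeartbeats 400000
set_option linter.unusedSectionVars false
set_option linter.unusedVariables false

noncomputable section
namespace MoritaHochschild

/-! ### Corners `pCq` of a ring with idempotents `p`, `q` -/

variable {C : Type} [Ring C]

instance factOneIdem : Fact (IsIdempotentElem (1 : C)) := ⟨IsIdempotentElem.one⟩

instance factOneSubIdem {e : C} [he : Fact (IsIdempotentElem e)] :
    Fact (IsIdempotentElem (1 - e)) := ⟨he.out.one_sub⟩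

/-- The subset `pCq` of a ring `C`; for idempotents `p`, `q` this is the
corresponding "corner" of `C`. -/
def Hand (p q : C) : Type := {x : C // p * x * q = x}

namespace Hand

variable {p q r : C}

def val (x : Hand p q) : C := x.1

lemma prop (x : Hand p q) : p * x.val * q = x.val := x.2

lemma val_injective : Function.Injective (val (p := p) (q := q)) :=
  fun _ _ h => Subtype.ext h

def mk (x : C) (h : p * x * q = x) : Hand p q := ⟨x, h⟩

instance : Zero (Hand p q) := ⟨⟨0, by simp⟩⟩
instance : Add (Hand p q) :=
  ⟨fun x y => ⟨x.val + y.val, by rw [mul_add, add_mul, x.prop, y.prop]⟩⟩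
instance : Neg (Hand p q) :=
  ⟨fun x => ⟨-x.val, by rw [mul_neg, neg_mul, x.prop]⟩⟩
instance : Sub (Hand p q) :=
  ⟨fun x y => ⟨x.val - y.val, by rw [mul_sub, sub_mul, x.prop, y.prop]⟩⟩
instance : SMul ℕ (Hand p q) :=
  ⟨fun n x => ⟨n • x.val, by rw [mul_smul_comm, smul_mul_assoc, x.prop]⟩⟩
instance : SMul ℤ (Hand p q) :=
  ⟨fun n x => ⟨n • x.val, by rw [mul_smul_comm, smul_mul_assoc, x.prop]⟩⟩

instance : AddCommGroup (Hand p q) :=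
  val_injective.addCommGroup val rfl (fun _ _ => rfl) (fun _ => rfl) (fun _ _ => rfl)
    (fun _ _ => rfl) (fun _ _ => rfl)

/-- `val` as an additive map. -/
def valHom : Hand p q →+ C where
  toFun := val
  map_zero' := rfl
  map_add' := fun _ _ => rfl

@[simp] lemma val_add (x y : Hand p q) : (x + y).val = x.val + y.val := rfl
@[simp] lemma val_zero : (0 : Hand p q).val = 0 := rfl

section Facts

variable [hp : Fact (IsIdempotentElem p)] [hq : Fact (IsIdempotentElem q)]
    [hr : Fact (IsIdempotentElem r)]

lemma left_absorb (x : Hand p q) : p * x.val = x.val := by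
  conv_lhs => rw [← x.prop]
  rw [← mul_assoc, ← mul_assoc, hp.out.eq]
  exact x.prop

lemma right_absorb (x : Hand p q) : x.val * q = x.val := by
  conv_lhs => rw [← x.prop]
  rw [mul_assoc, mul_assoc, hq.out.eq, ← mul_assoc]
  exact x.prop

/-- Multiplication `pCq × qCr → pCr`. -/
def hmul (x : Hand p q) (y : Hand q r) : Hand p r :=
  ⟨x.val * y.val, by
    rw [← mul_assoc, left_absorb x, mul_assoc, right_absorb y]⟩

@[simp] lemma val_hmul (x : Hand p q) (y : Hand q r) :
    (hmul x y).val = x.val * y.val := rfl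

/-- Compression of an element of `C` into the corner `pCq`. -/
def compress (p q : C) [hp : Fact (IsIdempotentElem p)] [hq : Fact (IsIdempotentElem q)]
    (x : C) : Hand p q :=
  ⟨p * x * q, by
    have h1 : p * (p * x * q) * q = (p * p) * x * (q * q) := by noncomm_ring
    rw [h1, hp.out.eq, hq.out.eq]⟩

@[simp] lemma val_compress (x : C) : (compress p q x).val = p * x * q := rfl

instance : Mul (Hand p p) := ⟨fun x y => hmul x y⟩

instance : One (Hand p p) := ⟨⟨p, by rw [hp.out.eq, hp.out.eq]⟩⟩

@[simp] lemma val_mul (x y : Hand p p) : (x * y).val = x.val * y.val := rfl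
@[simp] lemma val_one : (1 : Hand p p).val = p := rfl

/-- The corner `pCp` is a ring, with unit `p`. -/
instance ring : Ring (Hand p p) :=
  { (inferInstance : AddCommGroup (Hand p p)) with
    mul := (· * ·)
    left_distrib := fun x y z => Subtype.ext (mul_add x.val y.val z.val)
    right_distrib := fun x y z => Subtype.ext (add_mul x.val y.val z.val)
    zero_mul := fun x => Subtype.ext (zero_mul x.val)
    mul_zero := fun x => Subtype.ext (mul_zero x.val)
    mul_assoc := fun x y z => Subtype.ext (mul_assoc x.val y.val z.val)
    one := 1
    one_mul := fun x => Subtype.ext (left_absorb x)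
    mul_one := fun x => Subtype.ext (right_absorb x) }

/-- `pCq` is a left module over the corner ring `pCp`. -/
instance : Module (Hand p p) (Hand p q) where
  smul a x := hmul a x
  one_smul x := Subtype.ext (left_absorb x)
  mul_smul a b x := Subtype.ext (mul_assoc a.val b.val x.val)
  smul_zero a := Subtype.ext (mul_zero a.val)
  smul_add a x y := Subtype.ext (mul_add a.val x.val y.val)
  add_smul a b x := Subtype.ext (add_mul a.val b.val x.val)
  zero_smul x := Subtype.ext (zero_mul x.val)

/-- `pCq` is a right module over the corner ring `qCq`. -/
instance : Module (Hand q q)ᵐᵒᵖ (Hand p q) where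
  smul a x := hmul x a.unop
  one_smul x := Subtype.ext (right_absorb x)
  mul_smul a b x := Subtype.ext (mul_assoc x.val b.unop.val a.unop.val).symm
  smul_zero a := Subtype.ext (zero_mul a.unop.val)
  smul_add a x y := Subtype.ext (add_mul x.val y.val a.unop.val)
  add_smul a b x := Subtype.ext (mul_add x.val a.unop.val b.unop.val)
  zero_smul x := Subtype.ext (mul_zero x.val)

@[simp] lemma val_smul (a : Hand p p) (x : Hand p q) : (a • x).val = a.val * x.val := rfl

@[simp] lemma val_op_smul (a : (Hand q q)ᵐᵒᵖ) (x : Hand p q) :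
    (a • x).val = x.val * a.unop.val := rfl

/-- `pC = pC1` is a right module over `C` itself. -/
instance : Module Cᵐᵒᵖ (Hand p (1 : C)) where
  smul c x := ⟨x.val * c.unop, by rw [mul_one, ← mul_assoc, left_absorb x]⟩
  one_smul x := Subtype.ext (mul_one x.val)
  mul_smul a b x := Subtype.ext (mul_assoc x.val b.unop a.unop).symm
  smul_zero a := Subtype.ext (zero_mul a.unop)
  smul_add a x y := Subtype.ext (add_mul x.val y.val a.unop)
  add_smul a b x := Subtype.ext (mul_add x.val a.unop b.unop)
  zero_smul x := Subtype.ext (mul_zero x.val)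

@[simp] lemma val_op_smul' (c : Cᵐᵒᵖ) (x : Hand p (1 : C)) :
    (c • x).val = x.val * c.unop := rfl

/-- `Cq = 1Cq` is a left module over `C` itself. -/
instance : Module C (Hand (1 : C) q) where
  smul c x := ⟨c * x.val, by rw [one_mul, mul_assoc, right_absorb x]⟩
  one_smul x := Subtype.ext (one_mul x.val)
  mul_smul a b x := Subtype.ext (mul_assoc a b x.val)
  smul_zero a := Subtype.ext (mul_zero a)
  smul_add a x y := Subtype.ext (mul_add a x.val y.val)
  add_smul a b x := Subtype.ext (add_mul a b x.val)
  zero_smul x := Subtype.ext (zero_mul x.val)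

@[simp] lemma val_smul' (c : C) (x : Hand (1 : C) q) :
    (c • x).val = c * x.val := rfl

end Facts

end Hand
/-! ### The Morita defect `C̄ = C/CeC` -/

/-- The Morita defect: the quotient ring `C/CeC` of `C` by the two-sided ideal
generated by the idempotent `e`. -/
def CBar (e : C) : Type := (TwoSidedIdeal.span {e}).ringCon.Quotient

instance (e : C) : Ring (CBar e) :=
  inferInstanceAs (Ring (TwoSidedIdeal.span {e}).ringCon.Quotient)

/-- The quotient map `C → C/CeC`. -/
def cbarMk (e : C) : C →+* CBar e := RingCon.mk' _

lemma cbarMk_surjective (e : C) : Function.Surjective (cbarMk e) :=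
  fun x => Quotient.inductionOn' x (fun c => ⟨c, rfl⟩)

lemma cbarMk_eq_zero_iff (e : C) (x : C) :
    cbarMk e x = 0 ↔ x ∈ TwoSidedIdeal.span {e} := by
  have : (0 : CBar e) = cbarMk e 0 := rfl
  rw [this]
  constructor
  · intro h
    have h' := (RingCon.eq _).1 h
    simpa using (TwoSidedIdeal.rel_iff _ _ _).1 h'
  · intro h
    exact (RingCon.eq _).2 ((TwoSidedIdeal.rel_iff _ _ _).2 (by simpa using h))

/-- `C/CeC` as a right `C`-module. -/
noncomputable instance (e : C) : Module Cᵐᵒᵖ (CBar e) :=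
  Module.compHom (CBar e) (RingHom.op (cbarMk e))

lemma op_smul_cbar (e : C) (c : C) (x : CBar e) :
    (MulOpposite.op c) • x = x * cbarMk e c := rfl

/-- `C/CeC` as a left `C`-module. -/
noncomputable instance cbarLeftModule (e : C) : Module C (CBar e) :=
  Module.compHom (CBar e) (cbarMk e)

lemma smul_cbar (e : C) (c : C) (x : CBar e) :
    c • x = cbarMk e c * x := rfl
/-! ### Balanced tensor products over a (noncommutative) ring, via their universal property -/

/-- The biadditive pairing `φ : M × N → T` exhibits `T` as the balanced tensor product
`M ⊗_A N` of a right `A`-module `M` and a left `A`-module `N`. -/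
structure IsTensorProd (A : Type) [Ring A] (M N T : Type) [AddCommGroup M] [AddCommGroup N]
    [AddCommGroup T] [Module Aᵐᵒᵖ M] [Module A N] (φ : M →+ N →+ T) : Prop where
  balanced : ∀ (a : A) (m : M) (n : N), φ (MulOpposite.op a • m) n = φ m (a • n)
  generates : ∀ t : T, t ∈ AddSubgroup.closure {t : T | ∃ m n, t = φ m n}
  lift : ∀ (T' : Type) [AddCommGroup T'] (ψ : M →+ N →+ T'),
    (∀ (a : A) (m : M) (n : N), ψ (MulOpposite.op a • m) n = ψ m (a • n)) →
      ∃ g : T →+ T', ∀ m n, g (φ m n) = ψ m n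


/-!
The compression `x ⊗ y ↦ (1 - e) x ⊗ y (1 - e)` is a retraction `π` of the inclusion
`j : M ⊗_A N → Ce ⊗_A eC`, and `j π = (1 - L)(1 - R)`. Since `e x ∈ A` can be moved across the
tensor sign, `L (x ⊗ y) = e ⊗ e x y` and `R (x ⊗ y) = x y e ⊗ e` factor through `μ`; so `L` and
`R` vanish on `Ω_{C/A} = ker μ`, where `j π` is therefore the identity. Finally the image of `μ`
is `CeC`, and `μ j π` compresses `μ` by `1 - e` on both sides, which gives exactness at `B`.
-/

namespace IsTensorProd

variable {A M N T : Type} [Ring A] [AddCommGroup M] [AddCommGroup N] [AddCommGroup T]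
  [Module Aᵐᵒᵖ M] [Module A N] {φ : M →+ N →+ T}

theorem addMonoidHom_ext (hT : IsTensorProd A M N T φ) {X : Type*} [AddCommGroup X]
    {F G : T →+ X} (h : ∀ m n, F (φ m n) = G (φ m n)) : F = G :=
  AddMonoidHom.ext fun t =>
    AddMonoidHom.eqOn_closure (by rintro _ ⟨m, n, rfl⟩; exact h m n) (hT.generates t)

theorem range_le (hT : IsTensorProd A M N T φ) {X : Type*} [AddCommGroup X] (F : T →+ X)
    {S : AddSubgroup X} (h : ∀ m n, F (φ m n) ∈ S) : F.range ≤ S := by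
  rintro _ ⟨t, rfl⟩
  exact (AddSubgroup.closure_le (S.comap F)).2 (by rintro _ ⟨m, n, rfl⟩; exact h m n)
    (hT.generates t)

theorem exists_map (hT : IsTensorProd A M N T φ) {M' N' T' : Type} [AddCommGroup M']
    [AddCommGroup N'] [AddCommGroup T'] [Module Aᵐᵒᵖ M'] [Module A N'] {φ' : M' →+ N' →+ T'}
    (hφ' : ∀ (a : A) (m : M') (n : N'), φ' (op a • m) n = φ' m (a • n))
    (g : M →+ M') (h : N →+ N') (hg : ∀ (a : A) m, g (op a • m) = op a • g m)
    (hh : ∀ (a : A) n, h (a • n) = a • h n) :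
    ∃ π : T →+ T', ∀ m n, π (φ m n) = φ' (g m) (h n) :=
  hT.lift T' ((φ'.compl₂ h).comp g) fun a m n => by
    simp only [AddMonoidHom.comp_apply, AddMonoidHom.compl₂_apply, hg, hh, hφ']

end IsTensorProd

namespace Hand

variable {p q : C}

@[ext] lemma ext {x y : Hand p q} (h : x.val = y.val) : x = y := val_injective h

@[simp] lemma val_sub (x y : Hand p q) : (x - y).val = x.val - y.val := rfl

@[simp] lemma valHom_apply (x : Hand p q) : valHom x = x.val := rfl

section Idempotent

variable [Fact (IsIdempotentElem p)] [Fact (IsIdempotentElem q)]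

def toLeftOne (x : Hand p q) : Hand (1 : C) q := ⟨x.val, by rw [one_mul]; exact right_absorb x⟩

def toRightOne (x : Hand p q) : Hand p (1 : C) := ⟨x.val, by rw [mul_one]; exact left_absorb x⟩

@[simp] lemma val_toLeftOne (x : Hand p q) : x.toLeftOne.val = x.val := rfl

@[simp] lemma val_toRightOne (x : Hand p q) : x.toRightOne.val = x.val := rfl

def compressHom (p q : C) [Fact (IsIdempotentElem p)] [Fact (IsIdempotentElem q)] :
    C →+ Hand p q where
  toFun := compress p q
  map_zero' := ext (by simp)
  map_add' x y := ext (by simp [mul_add, add_mul])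

@[simp] lemma compressHom_apply (x : C) : compressHom p q x = compress p q x := rfl

def mulLeft (r : C) [hr : Fact (IsIdempotentElem r)] : Hand p q →+ Hand r q where
  toFun x := ⟨r * x.val, by rw [← mul_assoc, hr.out.eq, mul_assoc, right_absorb x]⟩
  map_zero' := ext (mul_zero r)
  map_add' x y := ext (mul_add r x.val y.val)

def mulRight (r : C) [hr : Fact (IsIdempotentElem r)] : Hand p q →+ Hand p r where
  toFun x := ⟨x.val * r, by rw [mul_assoc, mul_assoc, hr.out.eq, ← mul_assoc, left_absorb x]⟩
  map_zero' := ext (zero_mul r)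
  map_add' x y := ext (add_mul x.val y.val r)

@[simp] lemma val_mulLeft (r : C) [Fact (IsIdempotentElem r)] (x : Hand p q) :
    (mulLeft r x).val = r * x.val := rfl

@[simp] lemma val_mulRight (r : C) [Fact (IsIdempotentElem r)] (x : Hand p q) :
    (mulRight r x).val = x.val * r := rfl

lemma mulLeft_op_smul (r : C) [Fact (IsIdempotentElem r)] (a : Hand q q) (x : Hand p q) :
    mulLeft r (op a • x) = op a • mulLeft r x :=
  ext (mul_assoc r x.val a.val).symm

lemma mulRight_smul (r : C) [Fact (IsIdempotentElem r)] (a : Hand p p) (x : Hand p q) :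
    mulRight r (a • x) = a • mulRight r x :=
  ext (mul_assoc a.val x.val r)

@[simp] lemma mulLeft_toLeftOne (x : Hand p q) : mulLeft p x.toLeftOne = x :=
  ext (left_absorb x)

@[simp] lemma mulRight_toRightOne (x : Hand p q) : mulRight q x.toRightOne = x :=
  ext (right_absorb x)

end Idempotent

end Hand

lemma cbarMk_one_sub_mul_mul_one_sub (e c : C) :
    cbarMk e ((1 - e) * c * (1 - e)) = cbarMk e c := by
  have he : e ∈ TwoSidedIdeal.span {e} := TwoSidedIdeal.subset_span rfl
  rw [← sub_eq_zero, ← map_sub, cbarMk_eq_zero_iff,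
    show (1 - e) * c * (1 - e) - c = e * c * e - e * c - c * e by noncomm_ring]
  refine sub_mem (sub_mem ?_ (TwoSidedIdeal.mul_mem_right _ _ _ he))
    (TwoSidedIdeal.mul_mem_left _ _ _ he)
  exact TwoSidedIdeal.mul_mem_right _ _ _ (TwoSidedIdeal.mul_mem_right _ _ _ he)

section MoritaContext

variable {e : C} [he : Fact (IsIdempotentElem e)]
  {T : Type} [AddCommGroup T] {φ : Hand (1 - e) e →+ Hand e (1 - e) →+ T}
  {T₂ : Type} [AddCommGroup T₂] {φ₂ : Hand (1 : C) e →+ Hand e (1 : C) →+ T₂}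
  {μ : T₂ →+ C} {f : T →+ Hand (1 - e) (1 - e)} {j : T →+ T₂} {π : T₂ →+ T} {L R : T₂ →+ T₂}

theorem compression_inclusion_apply
    (hT : IsTensorProd (Hand e e) (Hand (1 - e) e) (Hand e (1 - e)) T φ)
    (hj : ∀ m n, j (φ m n) = φ₂ m.toLeftOne n.toRightOne)
    (hπ : ∀ x y, π (φ₂ x y) = φ (Hand.mulLeft (1 - e) x) (Hand.mulRight (1 - e) y))
    (t : T) : π (j t) = t :=
  DFunLike.congr_fun (hT.addMonoidHom_ext (F := π.comp j) (G := .id T) fun m n => by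
    simp only [AddMonoidHom.comp_apply, AddMonoidHom.id_apply, hj, hπ, Hand.mulLeft_toLeftOne,
      Hand.mulRight_toRightOne]) t

theorem mul_inclusion_apply
    (hT : IsTensorProd (Hand e e) (Hand (1 - e) e) (Hand e (1 - e)) T φ)
    (hμ : ∀ x y, μ (φ₂ x y) = x.val * y.val) (hf : ∀ m n, (f (φ m n)).val = m.val * n.val)
    (hj : ∀ m n, j (φ m n) = φ₂ m.toLeftOne n.toRightOne) (t : T) :
    μ (j t) = (f t).val :=
  DFunLike.congr_fun (hT.addMonoidHom_ext (F := μ.comp j) (G := Hand.valHom.comp f)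
    fun m n => by simp only [AddMonoidHom.comp_apply, Hand.valHom_apply, hj, hμ, hf,
      Hand.val_toLeftOne, Hand.val_toRightOne]) t

theorem mul_inclusion_compression_apply
    (hT₂ : IsTensorProd (Hand e e) (Hand (1 : C) e) (Hand e (1 : C)) T₂ φ₂)
    (hμ : ∀ x y, μ (φ₂ x y) = x.val * y.val)
    (hj : ∀ m n, j (φ m n) = φ₂ m.toLeftOne n.toRightOne)
    (hπ : ∀ x y, π (φ₂ x y) = φ (Hand.mulLeft (1 - e) x) (Hand.mulRight (1 - e) y))
    (t : T₂) : μ (j (π t)) = (1 - e) * μ t * (1 - e) :=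
  DFunLike.congr_fun (hT₂.addMonoidHom_ext (F := μ.comp (j.comp π))
    (G := (AddMonoidHom.mulRight (1 - e)).comp ((AddMonoidHom.mulLeft (1 - e)).comp μ))
    fun x y => by
      simp only [AddMonoidHom.comp_apply, AddMonoidHom.coe_mulLeft, AddMonoidHom.coe_mulRight,
        hπ, hj, hμ, Hand.val_toLeftOne, Hand.val_toRightOne, Hand.val_mulLeft,
        Hand.val_mulRight, mul_assoc]) t

theorem leftAction_apply
    (hT₂ : IsTensorProd (Hand e e) (Hand (1 : C) e) (Hand e (1 : C)) T₂ φ₂)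
    (hμ : ∀ x y, μ (φ₂ x y) = x.val * y.val) (hL : ∀ x y, L (φ₂ x y) = φ₂ (e • x) y)
    (t : T₂) : L t = φ₂ (Hand.compress 1 e e) (Hand.compressHom e 1 (μ t)) := by
  refine DFunLike.congr_fun (hT₂.addMonoidHom_ext
    (G := ((φ₂ (Hand.compress 1 e e)).comp (Hand.compressHom e 1)).comp μ) fun x y => ?_) t
  have hx : e • x = op (Hand.compress e e x.val) • Hand.compress 1 e e := by
    ext
    simp only [Hand.val_smul', Hand.val_op_smul, unop_op, Hand.val_compress, one_mul,
      ← mul_assoc, he.out.eq]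
    rw [mul_assoc, Hand.right_absorb]
  have hy : Hand.compress e 1 (x.val * y.val) = Hand.compress e e x.val • y := by
    ext; simp [mul_assoc, Hand.left_absorb]
  simp only [AddMonoidHom.comp_apply, hL, hμ, Hand.compressHom_apply, hx, hy, hT₂.balanced]

theorem rightAction_apply
    (hT₂ : IsTensorProd (Hand e e) (Hand (1 : C) e) (Hand e (1 : C)) T₂ φ₂)
    (hμ : ∀ x y, μ (φ₂ x y) = x.val * y.val) (hR : ∀ x y, R (φ₂ x y) = φ₂ x (op e • y))
    (t : T₂) : R t = φ₂ (Hand.compressHom 1 e (μ t)) (Hand.compress e 1 e) := by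
  refine DFunLike.congr_fun (hT₂.addMonoidHom_ext
    (G := ((φ₂.flip (Hand.compress e 1 e)).comp (Hand.compressHom 1 e)).comp μ) fun x y => ?_) t
  have hy : op e • y = Hand.compress e e y.val • Hand.compress e 1 e := by
    ext; simp [he.out.eq, mul_assoc, Hand.left_absorb]
  have hx : Hand.compress 1 e (x.val * y.val) = op (Hand.compress e e y.val) • x := by
    ext; simp [mul_assoc, Hand.left_absorb]
  simp only [AddMonoidHom.comp_apply, AddMonoidHom.flip_apply, hR, hμ, Hand.compressHom_apply,
    hx, hy, hT₂.balanced]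

theorem inclusion_compression_apply
    (hT₂ : IsTensorProd (Hand e e) (Hand (1 : C) e) (Hand e (1 : C)) T₂ φ₂)
    (hj : ∀ m n, j (φ m n) = φ₂ m.toLeftOne n.toRightOne)
    (hπ : ∀ x y, π (φ₂ x y) = φ (Hand.mulLeft (1 - e) x) (Hand.mulRight (1 - e) y))
    (hL : ∀ x y, L (φ₂ x y) = φ₂ (e • x) y) (hR : ∀ x y, R (φ₂ x y) = φ₂ x (op e • y))
    (t : T₂) : j (π t) = t - L t - R t + L (R t) := by
  refine DFunLike.congr_fun (hT₂.addMonoidHom_ext (F := j.comp π)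
    (G := .id T₂ - L - R + L.comp R) fun x y => ?_) t
  have hx : (Hand.mulLeft (1 - e) x).toLeftOne = x - e • x := by ext; simp [sub_mul]
  have hy : (Hand.mulRight (1 - e) y).toRightOne = y - op e • y := by ext; simp [mul_sub]
  simp only [AddMonoidHom.comp_apply, AddMonoidHom.add_apply, AddMonoidHom.sub_apply,
    AddMonoidHom.id_apply, hπ, hj, hx, hy, hL, hR, map_sub]
  abel

open scoped Pointwise in
theorem mem_range_mul_iff_mem_span
    (hT₂ : IsTensorProd (Hand e e) (Hand (1 : C) e) (Hand e (1 : C)) T₂ φ₂)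
    (hμ : ∀ x y, μ (φ₂ x y) = x.val * y.val) {c : C} :
    c ∈ μ.range ↔ c ∈ TwoSidedIdeal.span {e} := by
  rw [TwoSidedIdeal.mem_span_iff_mem_addSubgroup_closure]
  suffices μ.range = AddSubgroup.closure (Set.univ * {e} * Set.univ) by rw [this]
  refine le_antisymm (hT₂.range_le μ fun x y => AddSubgroup.subset_closure ?_)
    ((AddSubgroup.closure_le _).2 ?_)
  · refine ⟨x.val * e, ⟨x.val, trivial, e, rfl, rfl⟩, y.val, trivial, ?_⟩
    change x.val * e * y.val = μ (φ₂ x y)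
    rw [hμ, mul_assoc, Hand.left_absorb]
  · rintro _ ⟨_, ⟨a, -, e', he', rfl⟩, b, -, rfl⟩
    rw [Set.mem_singleton_iff.1 he']
    refine ⟨φ₂ (Hand.compress 1 e a) (Hand.compress e 1 b), ?_⟩
    simp only [hμ, Hand.val_compress, one_mul, mul_one, ← mul_assoc]
    rw [mul_assoc a e e, he.out.eq]

end MoritaContext

/-- For a Morita context `(C, e)` with `e' = 1 - e`, `A = eCe`,
`B = e'Ce'`, `M = e'Ce`, `N = eCe'`: applying `e'C ⊗_C - ⊗_C Ce'` to the fundamental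
exact sequence `0 → Ω_{C/A} → Ce ⊗_A eC → C → C̄ → 0` yields an exact sequence
`0 → Ω_{C/A} → M ⊗_A N → B → C̄ → 0`. In particular `C̄ ≅ B/((CeC) ∩ B)` is a homomorphic
image of `B`, isomorphic to the cokernel of the multiplication map `M ⊗_A N → B`, and the
`C`-bimodule `Ω_{C/A}` is annihilated by `e` on both sides.

Here the tensor products are given by their universal property (`IsTensorProd`), `μ` is
the multiplication map `Ce ⊗_A eC → C` with kernel `Ω_{C/A}`, `f` is the multiplication
map `M ⊗_A N → B`, `j : M ⊗_A N → Ce ⊗_A eC` is induced by the inclusions, and `L`, `R`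
are the left and right actions of `e` on `Ce ⊗_A eC`. -/
theorem fundamental_exact_sequence_of_morita_context
    (C : Type) [Ring C] (e : C) [Fact (IsIdempotentElem e)]
    -- M ⊗_A N
    (T : Type) [AddCommGroup T] (φ : Hand (1 - e) e →+ Hand e (1 - e) →+ T)
    (hT : IsTensorProd (Hand e e) (Hand (1 - e) e) (Hand e (1 - e)) T φ)
    -- Ce ⊗_A eC
    (T₂ : Type) [AddCommGroup T₂] (φ₂ : Hand (1 : C) e →+ Hand e (1 : C) →+ T₂)
    (hT₂ : IsTensorProd (Hand e e) (Hand (1 : C) e) (Hand e (1 : C)) T₂ φ₂)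
    -- μ_e : Ce ⊗_A eC → C, induced by multiplication
    (μ : T₂ →+ C) (hμ : ∀ x y, μ (φ₂ x y) = x.val * y.val)
    -- f : M ⊗_A N → B, induced by multiplication
    (f : T →+ Hand (1 - e) (1 - e)) (hf : ∀ m n, (f (φ m n)).val = m.val * n.val)
    -- j : M ⊗_A N → Ce ⊗_A eC, induced by the inclusions M ⊆ Ce, N ⊆ eC
    (j : T →+ T₂) (hj : ∀ m n, j (φ m n) =
      φ₂ ⟨m.val, by rw [one_mul]; exact Hand.right_absorb m⟩
        ⟨n.val, by rw [mul_one]; exact Hand.left_absorb n⟩)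
    -- the two-sided action of `e` on `Ce ⊗_A eC`
    (L : T₂ →+ T₂) (hL : ∀ x y, L (φ₂ x y) =
      φ₂ ⟨e * x.val, by rw [one_mul, mul_assoc, Hand.right_absorb x]⟩ y)
    (R : T₂ →+ T₂) (hR : ∀ x y, R (φ₂ x y) =
      φ₂ x ⟨y.val * e, by rw [mul_one, ← mul_assoc, Hand.left_absorb y]⟩) :
    -- `C̄` is a homomorphic image of `B`
    Function.Surjective (fun b : Hand (1 - e) (1 - e) => cbarMk e b.val)
    -- exactness at `B`: the kernel of `B → C̄` is the image of `f`
    ∧ (∀ b : Hand (1 - e) (1 - e), cbarMk e b.val = 0 ↔ b ∈ AddMonoidHom.range f)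
    -- exactness at `M ⊗_A N`: `j` identifies `ker f` with `Ω_{C/A} = ker μ`
    ∧ Function.Injective j
    ∧ AddSubgroup.map j (AddMonoidHom.ker f) = AddMonoidHom.ker μ
    -- `Ω_{C/A}` is annihilated by `e` on both sides
    ∧ (∀ t ∈ AddMonoidHom.ker μ, L t = 0 ∧ R t = 0) := by
  obtain ⟨π, hπ⟩ := hT₂.exists_map hT.balanced (Hand.mulLeft (1 - e)) (Hand.mulRight (1 - e))
    (Hand.mulLeft_op_smul (1 - e)) (Hand.mulRight_smul (1 - e))
  have hμj := mul_inclusion_apply hT hμ hf hj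
  have hΩ : ∀ t ∈ μ.ker, L t = 0 ∧ R t = 0 := fun t ht => by
    rw [leftAction_apply hT₂ hμ hL, rightAction_apply hT₂ hμ hR, AddMonoidHom.mem_ker.1 ht]
    simp only [map_zero, AddMonoidHom.zero_apply, and_self]
  refine ⟨fun x => ?_, fun b => ?_,
    Function.LeftInverse.injective (compression_inclusion_apply hT hj hπ), ?_, hΩ⟩
  · obtain ⟨c, rfl⟩ := cbarMk_surjective e x
    exact ⟨Hand.compress (1 - e) (1 - e) c, cbarMk_one_sub_mul_mul_one_sub e c⟩
  · rw [cbarMk_eq_zero_iff, ← mem_range_mul_iff_mem_span hT₂ hμ]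
    constructor
    · rintro ⟨t, ht⟩
      exact ⟨π t, Hand.ext (by rw [← hμj, mul_inclusion_compression_apply hT₂ hμ hj hπ, ht,
        b.prop])⟩
    · rintro ⟨t, rfl⟩
      exact ⟨j t, hμj t⟩
  · ext t
    constructor
    · rintro ⟨s, hs, rfl⟩
      rw [AddMonoidHom.mem_ker, hμj, hs, Hand.val_zero]
    · intro ht
      obtain ⟨hLt, hRt⟩ := hΩ t ht
      have hjπ : j (π t) = t := by
        rw [inclusion_compression_apply hT₂ hj hπ hL hR, hLt, hRt, map_zero]
        abel
      refine ⟨π t, Hand.ext ?_, hjπ⟩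
      rw [← hμj, hjπ, AddMonoidHom.mem_ker.1 ht, Hand.val_zero]

end MoritaHochschild
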